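/- Let V be a nonempty string over Σ_$ containing at least one occurrence of $, and let s be the position of the first occurrence of $ in V. Then for every i ∈ [1..s], rtsenc(V)[i..s] = rtsenc(V[i..s]), i.e., on the segment up to the first $, the rotational Cartesian tree signature encoding of V agrees with that of the corresponding substring. -/

import Mathlib

open Classical

/-- Unlabeled binary trees, representing the shapes of Cartesian trees
(Cartesian tree matching compares tree structure). -/
inductive CTree : Type where
  | leaf : CTree
  | node : CTree → CTree → CTree
  deriving DecidableEq

noncomputable section

/-- The alphabet `Σ_$`: the integer alphabet `Σ = {0,…,σ}` together with the
special symbol `$ = ⊥`, which is smaller than every symbol of `Σ`. -/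
abbrev Sig (σ : ℕ) := WithBot (Fin (σ + 1))

/-- The encoding alphabet `Σ_$ ∪ ℕ ∪ {∞}`: `$ = ⊥`, naturals, and `∞ = ⊤`. -/
abbrev Enc := WithBot (WithTop ℕ)

/-- The symbol `∞`, larger than every integer. -/
def infE : Enc := ((⊤ : WithTop ℕ) : Enc)

variable {σ : ℕ}

/-- 1-based access, defaulting to `$`. -/
def get1 (V : List (Sig σ)) (i : ℕ) : Sig σ := V.getD (i - 1) ⊥

/-- Parent distance encoding: entry at 1-based position `i`:
`∞` if `$ ≠ V[i] < V[j]` for all `j < i`; `$` if `V[i] = $`;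
otherwise `i − max{ j ∈ [1..i−1] : V[j] < V[i] }`. -/
def pdEntry (V : List (Sig σ)) (i : ℕ) : Enc :=
  if get1 V i = ⊥ then ⊥
  else if ∀ j, 1 ≤ j → j < i → get1 V i < get1 V j then infE
  else (((i - Nat.findGreatest (fun j => 1 ≤ j ∧ get1 V j < get1 V i) (i - 1) : ℕ) : WithTop ℕ) : Enc)

/-- The parent distance encoding `pd(V)`. -/
def pd (V : List (Sig σ)) : List Enc := (List.range V.length).map fun k => pdEntry V (k + 1)

/-- 0-based position of the leftmost minimum symbol. -/
def minPos (V : List (Sig σ)) : ℕ := V.findIdx fun c => V.all fun d => decide (c ≤ d)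

def ctAux : ℕ → List (Sig σ) → CTree
  | 0, _ => .leaf
  | fuel + 1, V =>
    if V.isEmpty then .leaf
    else .node (ctAux fuel (V.take (minPos V))) (ctAux fuel (V.drop (minPos V + 1)))

/-- The Cartesian tree `CT(V)`: root at the position of the smallest symbol
(ties broken towards the smallest position), recursing on both sides. -/
def ct (V : List (Sig σ)) : CTree := ctAux V.length V

/-- Cartesian tree matching: `U ≈ V` iff `CT(U) = CT(V)`. -/
def CtMatch (U V : List (Sig σ)) : Prop := ct U = ct V

/-- `k`-fold concatenation `Y^k`. -/
def listPow {α : Type*} : List α → ℕ → List α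
  | _, 0 => []
  | Y, k + 1 => Y ++ listPow Y k

/-- A string is primitive if `X = Y^k` implies `Y = X` and `k = 1`. -/
def Primitive {α : Type*} (X : List α) : Prop := ∀ Y k, X = listPow Y k → Y = X ∧ k = 1

/-- The primitive root `root(U)` of a string. -/
def proot {α : Type*} (U : List α) : List α :=
  if h : ∃ Y, Primitive Y ∧ ∃ k, 1 ≤ k ∧ U = listPow Y k then h.choose else U

/-- `V^ω[..i]`, the length-`i` prefix of the infinite self-concatenation of `V`. -/
def wpre {α : Type*} (V : List α) (i : ℕ) : List α := (listPow V i).take i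

/-- One left rotation. -/
def rotOne {α : Type*} (V : List α) : List α := V.drop 1 ++ V.take 1

/-- `rot(V,k)`, the `k`-th left rotation of `V`. -/
def rot {α : Type*} (V : List α) (k : ℕ) : List α := rotOne^[k] V

/-- Rotational parent distance encoding: `rpd(V) = pd(V·V)[|V|+1..]`. -/
def rpd (V : List (Sig σ)) : List Enc := (pd (V ++ V)).drop V.length

/-- The ω-preorder: `V ⪯ω U` iff there is `i` with `pd(V^ω[..i]) < pd(U^ω[..i])`
(lexicographically, with a proper prefix smaller), or `root(rpd V) = root(rpd U)`. -/
def omegaLe (V U : List (Sig σ)) : Prop :=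
  (∃ i : ℕ, List.Lex (· < ·) (pd (wpre V i)) (pd (wpre U i))) ∨ proot (rpd V) = proot (rpd U)

/-- `V =ω U`. -/
def omegaEq (V U : List (Sig σ)) : Prop := omegaLe V U ∧ omegaLe U V

/-- `V ≺ω U`. -/
def omegaLt (V U : List (Sig σ)) : Prop := omegaLe V U ∧ ¬ omegaEq V U

/-- Entry of the rotational Cartesian tree signature encoding at 1-based position `i`. -/
def rtsEntry (V : List (Sig σ)) (i : ℕ) : WithBot ℕ :=
  if get1 V i = ⊥ then ⊥
  else (((pd (rot V i)).count infE - ((pd (get1 V i :: rot V i)).drop 1).count infE : ℕ) : WithBot ℕ)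

/-- The rotational Cartesian tree signature encoding `rtsenc(V)`. -/
def rtsenc (V : List (Sig σ)) : List (WithBot ℕ) :=
  (List.range V.length).map fun k => rtsEntry V (k + 1)

/-- `π(V) = rtsenc(V)[1]`. -/
def piF (V : List (Sig σ)) : WithBot ℕ := (rtsenc V).getD 0 ⊥

/-- Length of the longest common prefix of two strings. -/
def lcpLen {α : Type*} [DecidableEq α] : List α → List α → ℕ
  | a :: as, b :: bs => if a = b then lcpLen as bs + 1 else 0
  | _, _ => 0

/-- `lcp∞(U,W)`: the number of occurrences of `∞` among the first `ℓ` symbols of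
`pd(U)`, where `ℓ` is the length of the longest common prefix of `pd U` and `pd W`. -/
def lcpInf (U W : List (Sig σ)) : ℕ := ((pd U).take (lcpLen (pd U) (pd W))).count infE

/-- Total length `n = |T_1 ⋯ T_d|` of all texts. -/
def totLen (Ts : List (List (Sig σ))) : ℕ := (Ts.map List.length).sum

/-- `conj_𝒯(i)` for `i ∈ [1..n]`: with `j = min{h : n_1+⋯+n_h ≥ i}`,
the rotation `rot(T_j, i − 1 − (n_1+⋯+n_{j−1}))`. -/
def conjAt : List (List (Sig σ)) → ℕ → List (Sig σ)
  | [], _ => []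
  | T :: Ts, i => if i ≤ T.length then rot T (i - 1) else conjAt Ts (i - T.length)

/-- The text `T_j` containing global position `i`. -/
def textAt : List (List (Sig σ)) → ℕ → List (Sig σ)
  | [], _ => []
  | T :: Ts, i => if i ≤ T.length then T else textAt Ts (i - T.length)

/-- `prev_𝒯(i)`. -/
def prevT (Ts : List (List (Sig σ))) (i : ℕ) : ℕ :=
  if omegaEq (conjAt Ts i) (textAt Ts i) then i - 1 + (proot (rpd (textAt Ts i))).length
  else i - 1

/-- `CA` is the conjugate array of the texts `Ts`: a permutation of `[1..n]` with
`CA[i] = j` iff `i − 1` equals the number of `k ∈ [1..n]` with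
`conj(k) ≺ω conj(j)`, or `conj(k) =ω conj(j)` and `k < j`. -/
def IsCA (Ts : List (List (Sig σ))) (CA : ℕ → ℕ) : Prop :=
  Set.BijOn CA (Set.Icc 1 (totLen Ts)) (Set.Icc 1 (totLen Ts)) ∧
  ∀ i ∈ Set.Icc 1 (totLen Ts), ∀ j ∈ Set.Icc 1 (totLen Ts),
    (CA i = j ↔ i - 1 = Set.ncard {k | k ∈ Set.Icc 1 (totLen Ts) ∧
      (omegaLt (conjAt Ts k) (conjAt Ts j) ∨ (omegaEq (conjAt Ts k) (conjAt Ts j) ∧ k < j))})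

/-- The conjugate range of `P`: positions `i ∈ [1..n]` with
`P ≈ conj(CA[i])^ω[..|P|]`. -/
def crange (Ts : List (List (Sig σ))) (CA : ℕ → ℕ) (P : List (Sig σ)) : Set ℕ :=
  {i | i ∈ Set.Icc 1 (totLen Ts) ∧ CtMatch P (wpre (conjAt Ts (CA i)) P.length)}

/-- `rank_c(V, j)`: number of occurrences of `c` in `V[..j]`. -/
def rankQ {α : Type*} [DecidableEq α] (c : α) (V : List α) (j : ℕ) : ℕ := (V.take j).count c

/-- `select_c(V, i)`: 1-based position of the `i`-th occurrence of `c` in `V`. -/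
def selectQ {α : Type*} [DecidableEq α] (c : α) (V : List α) (i : ℕ) : ℕ :=
  ((List.range V.length).findIdx fun k => (V.take (k + 1)).count c == i) + 1

end

/-!
A `$` is smaller than every symbol, so no position after a `$` is a prefix minimum: all `∞`
entries of `pd(X)`, and of `pd(c·X)` past its first entry, lie before the first `$` of `X`.
Hence `rtsenc(V)[k]` depends only on `V[k]` and on `rot(V,k)` up to its first `$`. For
`i ≤ k < s` this part is `V[k+1..s]`, both in `V` and in `V[i..s]`; at `k = s` both entries are `$`.
-/

theorem Nat.findGreatest_congr {P Q : ℕ → Prop} [DecidablePred P] [DecidablePred Q] {n : ℕ}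
    (h : ∀ k ≤ n, (P k ↔ Q k)) : Nat.findGreatest P n = Nat.findGreatest Q n := by
  induction n with
  | zero => rfl
  | succ n ih =>
    rw [Nat.findGreatest_succ, Nat.findGreatest_succ, ih fun k hk => h k (Nat.le_succ_of_le hk)]
    exact if_congr (h (n + 1) le_rfl) rfl rfl

theorem List.exists_eq_append_cons_length_idxOf {α : Type*} [BEq α] [LawfulBEq α] {a : α}
    {l : List α} (h : a ∈ l) : ∃ A B, l = A ++ a :: B ∧ A.length = l.idxOf a := by
  have hlt : l.idxOf a < l.length := List.idxOf_lt_length_iff.2 h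
  refine ⟨l.take (l.idxOf a), l.drop (l.idxOf a + 1), ?_, List.length_take_of_le hlt.le⟩
  conv_lhs => rw [← List.take_append_drop (l.idxOf a) l, ← List.getElem_cons_drop hlt,
    List.getElem_idxOf hlt]

theorem rot_eq_rotate' {α : Type*} (V : List α) (k : ℕ) : rot V k = V.rotate' k := by
  induction k with
  | zero => simp [rot]
  | succ k ih =>
    have hrotOne : ∀ W : List α, rotOne W = W.rotate' 1 := by
      rintro (_ | ⟨a, W⟩) <;> simp [rotOne, List.rotate']
    rw [rot, Function.iterate_succ_apply', ← rot, ih, hrotOne, List.rotate'_rotate']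

theorem rot_append_of_length_eq {α : Type*} {X Y : List α} {n : ℕ} (h : X.length = n) :
    rot (X ++ Y) n = Y ++ X := by
  subst h
  rw [rot_eq_rotate', List.rotate'_eq_drop_append_take (by simp), List.drop_left, List.take_left]

section RtsencSegment

variable {σ : ℕ}

theorem get1_take {X : List (Sig σ)} {n j : ℕ} (h : j - 1 < n) :
    get1 (X.take n) j = get1 X j := by
  simp only [get1, List.getD_eq_getElem?_getD, List.getElem?_take, if_pos h]

theorem get1_append_length_add {X Y : List (Sig σ)} {k : ℕ} (hk : 1 ≤ k) :
    get1 (X ++ Y) (X.length + k) = get1 Y k := by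
  simp only [get1, List.getD_eq_getElem?_getD]
  rw [show X.length + k - 1 = X.length + (k - 1) by omega,
    List.getElem?_append_right (by omega), Nat.add_sub_cancel_left]

theorem pdEntry_take {X : List (Sig σ)} {n k : ℕ} (hk1 : 1 ≤ k) (hkn : k ≤ n) :
    pdEntry (X.take n) k = pdEntry X k := by
  have hget : ∀ j ≤ k, get1 (X.take n) j = get1 X j := fun j hj => get1_take (by omega)
  have hroot : (∀ j, 1 ≤ j → j < k → get1 X k < get1 (X.take n) j) ↔
      (∀ j, 1 ≤ j → j < k → get1 X k < get1 X j) :=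
    forall_congr' fun j => imp_congr_right fun _ => imp_congr_right fun hjk => by
      rw [hget j hjk.le]
  have hparent : Nat.findGreatest (fun j => 1 ≤ j ∧ get1 (X.take n) j < get1 X k) (k - 1) =
      Nat.findGreatest (fun j => 1 ≤ j ∧ get1 X j < get1 X k) (k - 1) :=
    Nat.findGreatest_congr fun j hj => by rw [hget j (by omega)]
  simp only [pdEntry, hget k le_rfl, hroot, hparent]
  congr

theorem pd_take (X : List (Sig σ)) (n : ℕ) : pd (X.take n) = (pd X).take n := by
  simp only [pd, ← List.map_take, List.take_range, List.length_take]
  exact List.map_congr_left fun k hk => pdEntry_take (by omega) (by simp at hk; omega)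

theorem pdEntry_ne_infE_of_get1_eq_bot {X : List (Sig σ)} {j k : ℕ} (hj : 1 ≤ j) (hjk : j < k)
    (hbot : get1 X j = ⊥) : pdEntry X k ≠ infE := by
  unfold pdEntry
  split_ifs with _ hroot
  · simp [infE]
  · simpa [hbot] using hroot j hj hjk
  · simp [infE]

theorem infE_notMem_drop_pd {X : List (Sig σ)} {n : ℕ} (hn : 1 ≤ n) (hbot : get1 X n = ⊥) :
    infE ∉ (pd X).drop n := by
  intro hmem
  obtain ⟨k, hk, hentry⟩ := List.mem_iff_getElem.1 hmem
  simp only [pd, List.getElem_drop, List.getElem_map, List.getElem_range] at hentry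
  exact pdEntry_ne_infE_of_get1_eq_bot hn (by omega) hbot hentry

theorem count_infE_drop_pd_append_bot (D E : List (Sig σ)) {d : ℕ} (hd : d ≤ D.length + 1) :
    ((pd (D ++ ⊥ :: E)).drop d).count infE = ((pd (D ++ [⊥])).drop d).count infE := by
  have htake : (D ++ ⊥ :: E).take (D.length + 1) = D ++ [⊥] := by
    rw [List.take_length_add_append]; rfl
  have hbot : get1 (D ++ ⊥ :: E) (D.length + 1) = ⊥ := by
    rw [get1_append_length_add le_rfl]; rfl
  have hlen : d ≤ ((pd (D ++ ⊥ :: E)).take (D.length + 1)).length := by simp [pd]; omega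
  rw [← htake, pd_take]
  conv_lhs => rw [← List.take_append_drop (D.length + 1) (pd (D ++ ⊥ :: E))]
  rw [List.drop_append_of_le_length hlen, List.count_append,
    List.count_eq_zero.2 (infE_notMem_drop_pd (by omega) hbot), add_zero]

theorem rtsEntry_eq_of_rot_eq {V W : List (Sig σ)} {k l : ℕ} {D E F : List (Sig σ)}
    (hget : get1 V k = get1 W l) (hV : rot V k = D ++ ⊥ :: E) (hW : rot W l = D ++ ⊥ :: F) :
    rtsEntry V k = rtsEntry W l := by
  have hcount : (pd (rot V k)).count infE = (pd (rot W l)).count infE := by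
    simpa only [hV, hW, List.drop_zero] using
      (count_infE_drop_pd_append_bot D E (d := 0) (by omega)).trans
        (count_infE_drop_pd_append_bot D F (by omega)).symm
  have hcount_cons (c : Sig σ) : ((pd (c :: rot V k)).drop 1).count infE =
      ((pd (c :: rot W l)).drop 1).count infE := by
    rw [hV, hW, ← List.cons_append, ← List.cons_append,
      count_infE_drop_pd_append_bot (c :: D) E (by simp),
      count_infE_drop_pd_append_bot (c :: D) F (by simp)]
  simp only [rtsEntry, hget, hcount, hcount_cons]

theorem rtsEntry_append_bot {C A B : List (Sig σ)} {k : ℕ} (hk1 : 1 ≤ k)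
    (hk : k ≤ A.length + 1) :
    rtsEntry (C ++ A ++ ⊥ :: B) (C.length + k) = rtsEntry (A ++ [⊥]) k := by
  have hget : get1 (C ++ A ++ ⊥ :: B) (C.length + k) = get1 (A ++ [⊥]) k := by
    rw [List.append_assoc, get1_append_length_add hk1, ← get1_take (n := A.length + 1) (by omega),
      List.take_length_add_append]
    rfl
  rcases hk.lt_or_eq with hlt | rfl
  · have hV : C ++ A ++ ⊥ :: B = (C ++ A.take k) ++ (A.drop k ++ ⊥ :: B) := by
      rw [List.append_assoc, List.append_assoc, ← List.append_assoc (A.take k),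
        List.take_append_drop]
    have hW : A ++ [⊥] = A.take k ++ (A.drop k ++ [⊥]) := by
      rw [← List.append_assoc, List.take_append_drop]
    refine rtsEntry_eq_of_rot_eq (D := A.drop k) (E := B ++ C ++ A.take k) (F := A.take k) hget ?_ ?_
    · rw [hV, rot_append_of_length_eq (by simp; omega)]; simp
    · rw [hW, rot_append_of_length_eq (by simp; omega)]; simp
  · have hbot : get1 (A ++ [⊥]) (A.length + 1) = ⊥ := by
      rw [get1_append_length_add le_rfl]; rfl
    simp only [rtsEntry, hget, hbot, if_true]

theorem rtsenc_append_bot_segment (C A B : List (Sig σ)) :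
    ((rtsenc (C ++ A ++ ⊥ :: B)).take (C.length + A.length + 1)).drop C.length =
      rtsenc (A ++ [⊥]) := by
  apply List.ext_getElem
  · simp [rtsenc]; omega
  · intro t _ ht
    simp only [rtsenc, List.length_map, List.length_range, List.length_append,
      List.length_singleton] at ht
    simp only [rtsenc, List.getElem_drop, List.getElem_take, List.getElem_map,
      List.getElem_range, add_assoc]
    exact rtsEntry_append_bot (by omega) (by omega)

end RtsencSegment

theorem rtsenc_prefix_segment_general (σ : ℕ) (V : List (Sig σ))
    (hmem : (⊥ : Sig σ) ∈ V) (s : ℕ) (hs : s = V.idxOf (⊥ : Sig σ) + 1) :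
    ∀ i ∈ Set.Icc 1 s,
      ((rtsenc V).take s).drop (i - 1) = rtsenc ((V.take s).drop (i - 1)) := by
  rintro i ⟨hi1, his⟩
  obtain ⟨A, B, rfl, hA⟩ := List.exists_eq_append_cons_length_idxOf hmem
  rw [← hA] at hs
  subst hs
  have hseg := rtsenc_append_bot_segment (A.take (i - 1)) (A.drop (i - 1)) B
  rw [List.take_append_drop, List.length_take_of_le (by omega), List.length_drop,
    show i - 1 + (A.length - (i - 1)) + 1 = A.length + 1 by omega] at hseg
  rw [hseg, List.take_length_add_append, List.drop_append_of_le_length (by omega)]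
  rfl

/-- Let `V` be a nonempty string over `Σ_$` containing `$`, and
let `s` be the (1-based) position of the first `$` in `V`. Then for every
`i ∈ [1..s]`, `rtsenc(V)[i..s] = rtsenc(V[i..s])`. -/
theorem rtsenc_prefix_segment (σ : ℕ) (V : List (Sig σ)) (hV : V ≠ [])
    (hmem : (⊥ : Sig σ) ∈ V) (s : ℕ) (hs : s = V.idxOf (⊥ : Sig σ) + 1) :
    ∀ i ∈ Set.Icc 1 s,
      ((rtsenc V).take s).drop (i - 1) = rtsenc ((V.take s).drop (i - 1)) :=
  rtsenc_prefix_segment_general σ V hmem s hs
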